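/- Let F be an algebra of partial functions. Then F admits a complete representation by partial functions if and only if F is atomic and composition in F is completely left-distributive over joins. -/

import Mathlib

/-! Algebras of partial functions: basic definitions. -/

namespace PFAlg

variable {X Y : Type*}

/-- `f ⊆ X × X` is a partial function. -/
def IsPF (f : Set (X × X)) : Prop :=
  ∀ ⦃x y z : X⦄, (x, y) ∈ f → (x, z) ∈ f → y = z

/-- Composition of partial functions (binary relations), written left-to-right:
`f ∘ g = {(x,z) : ∃ y, (x,y) ∈ f and (y,z) ∈ g}`. -/
def comp (f g : Set (X × X)) : Set (X × X) :=
  {p | ∃ y, (p.1, y) ∈ f ∧ (y, p.2) ∈ g}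

/-- Antidomain: the diagonal of the set of points where `f` is undefined. -/
def adom (f : Set (X × X)) : Set (X × X) :=
  {p | p.1 = p.2 ∧ ∀ y, (p.1, y) ∉ f}

/-- An algebra of partial functions on the base `X`: a nonempty collection of
partial functions closed under composition, intersection and antidomain. -/
structure IsPFAlgebra (F : Set (Set (X × X))) : Prop where
  nonempty : F.Nonempty
  pf : ∀ f ∈ F, IsPF f
  comp_mem : ∀ f ∈ F, ∀ g ∈ F, comp f g ∈ F
  inter_mem : ∀ f ∈ F, ∀ g ∈ F, f ∩ g ∈ F
  adom_mem : ∀ f ∈ F, adom f ∈ F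

/-- `m` is the supremum of `S` in the poset `(F, ⊆)`. -/
def IsLUBIn (F S : Set (Set (X × X))) (m : Set (X × X)) : Prop :=
  m ∈ F ∧ (∀ s ∈ S, s ⊆ m) ∧ ∀ c ∈ F, (∀ s ∈ S, s ⊆ c) → m ⊆ c

/-- `m` is the infimum of `S` in the poset `(F, ⊆)`. -/
def IsGLBIn (F S : Set (Set (X × X))) (m : Set (X × X)) : Prop :=
  m ∈ F ∧ (∀ s ∈ S, m ⊆ s) ∧ ∀ c ∈ F, (∀ s ∈ S, c ⊆ s) → c ⊆ m

/-- `b` is an atom of `F`: a minimal element of `F \ {∅}`. -/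
def IsAtomOf (F : Set (Set (X × X))) (b : Set (X × X)) : Prop :=
  b ∈ F ∧ b ≠ ∅ ∧ ∀ g ∈ F, g ≠ ∅ → g ⊆ b → g = b

/-- `F` is atomic: every nonempty member contains an atom. -/
def Atomic (F : Set (Set (X × X))) : Prop :=
  ∀ f ∈ F, f ≠ ∅ → ∃ b, IsAtomOf F b ∧ b ⊆ f

/-- A representation of `F` by partial functions over the base `Y`. -/
structure IsRep (F : Set (Set (X × X))) (θ : Set (X × X) → Set (Y × Y)) : Prop where
  injOn : Set.InjOn θ F
  pf : ∀ f ∈ F, IsPF (θ f)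
  comp_eq : ∀ f ∈ F, ∀ g ∈ F, θ (comp f g) = comp (θ f) (θ g)
  inter_eq : ∀ f ∈ F, ∀ g ∈ F, θ (f ∩ g) = θ f ∩ θ g
  adom_eq : ∀ f ∈ F, θ (adom f) = adom (θ f)

/-- `θ` is meet complete: it turns existing infima of nonempty subsets into intersections. -/
def MeetComplete (F : Set (Set (X × X))) (θ : Set (X × X) → Set (Y × Y)) : Prop :=
  ∀ S ⊆ F, S.Nonempty → ∀ m, IsGLBIn F S m → θ m = ⋂ s ∈ S, θ s

/-- `θ` is join complete: it turns existing suprema into unions. -/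
def JoinComplete (F : Set (Set (X × X))) (θ : Set (X × X) → Set (Y × Y)) : Prop :=
  ∀ S ⊆ F, ∀ m, IsLUBIn F S m → θ m = ⋃ s ∈ S, θ s

/-- `θ` is an atomic representation. -/
def AtomicRep (F : Set (Set (X × X))) (θ : Set (X × X) → Set (Y × Y)) : Prop :=
  ∀ f ∈ F, ∀ p ∈ θ f, ∃ b, IsAtomOf F b ∧ p ∈ θ b

/-- Composition in `F` is completely left-distributive over joins. -/
def CompLeftDistribJoins (F : Set (Set (X × X))) : Prop :=
  ∀ a ∈ F, ∀ S ⊆ F, ∀ m, IsLUBIn F S m → IsLUBIn F ((fun s => comp a s) '' S) (comp a m)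

/-- Composition in `F` is completely left-distributive over meets. -/
def CompLeftDistribMeets (F : Set (Set (X × X))) : Prop :=
  ∀ a ∈ F, ∀ S ⊆ F, S.Nonempty → ∀ m, IsGLBIn F S m →
    IsGLBIn F ((fun s => comp a s) '' S) (comp a m)

end PFAlg

/-!
If `θ` is a complete representation and `p ∈ θ f`, then `f` is not the join of the elements below
it whose images miss `p`; an upper bound of those elements that is not above `f` cuts out of `f`
a nonempty element all of whose nonempty parts contain `p` in their image, and such an element is
an atom. Distributivity is pulled back from the representation, where composition distributes
over unions.

Conversely, `F` is represented over its atoms: for an atom `a`, `a ∘ f` is empty or again an atom,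
so `f` acts as the partial function `a ↦ a ∘ f`. Left distributivity makes this representation
preserve joins, and it preserves meets because `s₀ \ ·` turns the meet of a family containing `s₀`
into a join.
-/

namespace PFAlg

variable {X Y : Type*}

section Relations

theorem mem_comp {f g : Set (X × X)} {x z : X} :
    (x, z) ∈ comp f g ↔ ∃ y, (x, y) ∈ f ∧ (y, z) ∈ g :=
  Iff.rfl

theorem mem_adom {f : Set (X × X)} {x z : X} : (x, z) ∈ adom f ↔ x = z ∧ ∀ y, (x, y) ∉ f :=
  Iff.rfl

theorem comp_assoc (f g h : Set (X × X)) : comp (comp f g) h = comp f (comp g h) :=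
  SetRel.comp_assoc f g h

theorem comp_empty (f : Set (X × X)) : comp f ∅ = ∅ :=
  SetRel.comp_empty f

theorem empty_comp (f : Set (X × X)) : comp ∅ f = ∅ :=
  SetRel.empty_comp f

theorem comp_mono_right (a : Set (X × X)) {s t : Set (X × X)} (h : s ⊆ t) :
    comp a s ⊆ comp a t :=
  SetRel.comp_subset_comp_right h

theorem comp_biUnion {ι : Type*} (a : Set (X × X)) (S : Set ι) (t : ι → Set (X × X)) :
    comp a (⋃ i ∈ S, t i) = ⋃ i ∈ S, comp a (t i) :=
  (SetRel.comp_iUnion _ _).trans (Set.iUnion_congr fun _ => SetRel.comp_iUnion _ _)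

theorem adom_comp_self (f : Set (X × X)) : comp (adom f) f = ∅ :=
  Set.eq_empty_of_forall_notMem fun _ ⟨_, ⟨rfl, hf⟩, hfz⟩ => hf _ hfz

theorem adom_comp_subset (f a : Set (X × X)) : comp (adom f) a ⊆ a := by
  rintro ⟨x, z⟩ ⟨y, (⟨rfl, -⟩ : x = y ∧ _), hyz⟩
  exact hyz

theorem comp_adom_subset (a f : Set (X × X)) : comp a (adom f) ⊆ a := by
  rintro ⟨x, z⟩ ⟨y, hxy, (⟨rfl, -⟩ : y = z ∧ _)⟩
  exact hxy

theorem comp_adom_eq_self_iff (a f : Set (X × X)) : comp a (adom f) = a ↔ comp a f = ∅ := by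
  constructor
  · intro h
    rw [← h, comp_assoc, adom_comp_self, comp_empty]
  · refine fun h => (comp_adom_subset a f).antisymm fun ⟨x, y⟩ hxy => ⟨y, hxy, rfl, fun z hyz => ?_⟩
    exact (Set.eq_empty_iff_forall_notMem.1 h (x, z)) ⟨y, hxy, hyz⟩

theorem IsPF.comp_inter {a : Set (X × X)} (ha : IsPF a) (f g : Set (X × X)) :
    comp a (f ∩ g) = comp a f ∩ comp a g := by
  ext ⟨x, z⟩
  constructor
  · rintro ⟨y, hxy, hf, hg⟩
    exact ⟨⟨y, hxy, hf⟩, ⟨y, hxy, hg⟩⟩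
  · rintro ⟨⟨y, hxy, hf⟩, ⟨y', hxy', hg⟩⟩
    exact ⟨y, hxy, hf, ha hxy' hxy ▸ hg⟩

theorem IsPF.comp_diff {a : Set (X × X)} (ha : IsPF a) (f g : Set (X × X)) :
    comp a (f \ g) = comp a f \ comp a g := by
  ext ⟨x, z⟩
  constructor
  · rintro ⟨y, hxy, hf, hg⟩
    exact ⟨⟨y, hxy, hf⟩, fun ⟨y', hxy', hg'⟩ => hg (ha hxy' hxy ▸ hg')⟩
  · rintro ⟨⟨y, hxy, hf⟩, hg⟩
    exact ⟨y, hxy, hf, fun hg' => hg ⟨y, hxy, hg'⟩⟩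

theorem IsPF.adom_inter_comp {f : Set (X × X)} (hf : IsPF f) (g : Set (X × X)) :
    comp (adom (f ∩ g)) f = f \ g := by
  ext ⟨x, z⟩
  constructor
  · rintro ⟨y, (⟨rfl, hfg⟩ : x = y ∧ _), hf'⟩
    exact ⟨hf', fun hg => hfg z ⟨hf', hg⟩⟩
  · rintro ⟨hf', hg⟩
    exact ⟨x, ⟨rfl, fun w hw => hg (hf hw.1 hf' ▸ hw.2)⟩, hf'⟩

def dom (f : Set (X × X)) : Set (X × X) := adom (adom f)

theorem mem_dom {g : Set (X × X)} {x z : X} : (x, z) ∈ dom g ↔ x = z ∧ ∃ w, (x, w) ∈ g := by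
  simp [dom, mem_adom]

theorem IsPF.dom_comp_eq {g h : Set (X × X)} (hh : IsPF h) (hgh : g ⊆ h) :
    comp (dom g) h = g := by
  ext ⟨x, z⟩
  rw [mem_comp]
  constructor
  · rintro ⟨y, hd, hyz⟩
    obtain ⟨rfl, w, hw⟩ := mem_dom.1 hd
    exact hh (hgh hw) hyz ▸ hw
  · exact fun hg => ⟨x, mem_dom.2 ⟨rfl, z, hg⟩, hgh hg⟩

end Relations

namespace IsPFAlgebra

variable {F : Set (Set (X × X))}

theorem empty_mem (hF : IsPFAlgebra F) : (∅ : Set (X × X)) ∈ F := by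
  obtain ⟨f, hf⟩ := hF.nonempty
  simpa only [adom_comp_self] using hF.comp_mem _ (hF.adom_mem f hf) f hf

theorem diff_mem (hF : IsPFAlgebra F) {f g : Set (X × X)} (hf : f ∈ F) (hg : g ∈ F) :
    f \ g ∈ F := by
  rw [← (hF.pf f hf).adom_inter_comp g]
  exact hF.comp_mem _ (hF.adom_mem _ (hF.inter_mem f hf g hg)) f hf

theorem dom_mem (hF : IsPFAlgebra F) {f : Set (X × X)} (hf : f ∈ F) : dom f ∈ F :=
  hF.adom_mem _ (hF.adom_mem f hf)

end IsPFAlgebra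

section Bounds

variable {F S : Set (Set (X × X))} {m : Set (X × X)}

theorem IsLUBIn.eq_empty (hm : IsLUBIn F S m) (hF : IsPFAlgebra F) (h : ∀ s ∈ S, s = ∅) :
    m = ∅ :=
  Set.subset_empty_iff.1 (hm.2.2 ∅ hF.empty_mem fun s hs => (h s hs).subset)

theorem IsGLBIn.diff_isLUBIn (hm : IsGLBIn F S m) (hF : IsPFAlgebra F) (hS : S ⊆ F)
    {s₀ : Set (X × X)} (hs₀ : s₀ ∈ S) : IsLUBIn F ((s₀ \ ·) '' S) (s₀ \ m) := by
  refine ⟨hF.diff_mem (hS hs₀) hm.1, ?_, fun c hc hub => ?_⟩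
  · rintro _ ⟨s, hs, rfl⟩
    exact Set.sdiff_subset_sdiff_right (hm.2.1 s hs)
  · have hcm : s₀ \ c ⊆ m := hm.2.2 _ (hF.diff_mem (hS hs₀) hc) fun s hs q hq =>
      by_contra fun hqs => hq.2 (hub _ ⟨s, hs, rfl⟩ ⟨hq.1, hqs⟩)
    exact fun q hq => by_contra fun hqc => hq.2 (hcm ⟨hq.1, hqc⟩)

end Bounds

section Atoms

variable {F : Set (Set (X × X))}

theorem IsAtomOf.eq_of_subset {b g : Set (X × X)} (hb : IsAtomOf F b) (hg : g ∈ F) (hne : g ≠ ∅)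
    (h : g ⊆ b) : g = b :=
  hb.2.2 g hg hne h

theorem isAtomOf_comp (hF : IsPFAlgebra F) {a f : Set (X × X)} (ha : IsAtomOf F a) (hf : f ∈ F)
    (hne : comp a f ≠ ∅) : IsAtomOf F (comp a f) := by
  refine ⟨hF.comp_mem a ha.1 f hf, hne, fun g hg hgne hga => ?_⟩
  -- restricting `a` to the domain of `g` leaves a nonempty part of the atom `a`, hence all of it
  have hda : comp (dom g) a = a := by
    refine ha.eq_of_subset (hF.comp_mem _ (hF.dom_mem hg) a ha.1) ?_ (adom_comp_subset _ a)
    obtain ⟨⟨x, w⟩, hxw⟩ := Set.nonempty_iff_ne_empty.2 hgne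
    obtain ⟨y, hxy, -⟩ := hga hxw
    exact Set.nonempty_iff_ne_empty.1 ⟨(x, y), x, mem_dom.2 ⟨rfl, w, hxw⟩, hxy⟩
  calc g = comp (dom g) (comp a f) := ((hF.pf _ (hF.comp_mem a ha.1 f hf)).dom_comp_eq hga).symm
    _ = comp a f := by rw [← comp_assoc, hda]

end Atoms

namespace IsRep

variable {F : Set (Set (X × X))} {θ : Set (X × X) → Set (Y × Y)}

theorem map_empty (hθ : IsRep F θ) (hF : IsPFAlgebra F) : θ ∅ = ∅ := by
  obtain ⟨f, hf⟩ := hF.nonempty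
  rw [← adom_comp_self f, hθ.comp_eq _ (hF.adom_mem f hf) f hf, hθ.adom_eq f hf, adom_comp_self]

theorem map_ne_empty (hθ : IsRep F θ) (hF : IsPFAlgebra F) {f : Set (X × X)} (hf : f ∈ F)
    (hne : f ≠ ∅) : θ f ≠ ∅ :=
  fun h => hne (hθ.injOn hf hF.empty_mem (h.trans (hθ.map_empty hF).symm))

theorem map_subset_map_iff (hθ : IsRep F θ) (hF : IsPFAlgebra F) {f g : Set (X × X)}
    (hf : f ∈ F) (hg : g ∈ F) : θ f ⊆ θ g ↔ f ⊆ g := by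
  rw [← Set.inter_eq_left, ← Set.inter_eq_left (s := f), ← hθ.inter_eq f hf g hg]
  exact hθ.injOn.eq_iff (hF.inter_mem f hf g hg) hf

theorem isAtomOf_of_forall_mem (hθ : IsRep F θ) (hF : IsPFAlgebra F) {b : Set (X × X)}
    (hb : b ∈ F) (hne : b ≠ ∅) {p : Y × Y} (h : ∀ g ∈ F, g ≠ ∅ → g ⊆ b → p ∈ θ g) :
    IsAtomOf F b := by
  refine ⟨hb, hne, fun g hg hgne hgb => ?_⟩
  by_contra hgb'
  have hrest : b \ g ≠ ∅ := fun h0 => hgb' (hgb.antisymm (Set.sdiff_eq_empty.1 h0))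
  have hp : p ∈ θ (g ∩ (b \ g)) := by
    rw [hθ.inter_eq g hg _ (hF.diff_mem hb hg)]
    exact ⟨h g hg hgne hgb, h _ (hF.diff_mem hb hg) hrest Set.sdiff_subset⟩
  rw [Set.inter_sdiff_self, hθ.map_empty hF] at hp
  exact hp

theorem exists_isAtomOf_subset_mem (hθ : IsRep F θ) (hF : IsPFAlgebra F)
    (hJ : JoinComplete F θ) {f : Set (X × X)} (hf : f ∈ F) {p : Y × Y} (hp : p ∈ θ f) :
    ∃ b, IsAtomOf F b ∧ b ⊆ f ∧ p ∈ θ b := by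
  set S := {g | g ∈ F ∧ g ⊆ f ∧ p ∉ θ g}
  -- `f` is not the join of `S`, since `p ∉ ⋃ g ∈ S, θ g`
  obtain ⟨c, hc, hSc, hfc⟩ : ∃ c ∈ F, (∀ g ∈ S, g ⊆ c) ∧ ¬f ⊆ c := by
    by_contra! h
    have hS : IsLUBIn F S f := ⟨hf, fun g hg => hg.2.1, h⟩
    obtain ⟨g, hg, hpg⟩ := Set.mem_iUnion₂.1 (hJ S (fun g hg => hg.1) f hS ▸ hp)
    exact hg.2.2 hpg
  have hb := hF.diff_mem hf hc
  have hne : f \ c ≠ ∅ := Set.nonempty_iff_ne_empty.1 (Set.sdiff_nonempty.2 hfc)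
  have key : ∀ g ∈ F, g ≠ ∅ → g ⊆ f \ c → p ∈ θ g := fun g hg hgne hgb => by_contra fun hpg =>
    hgne (Set.subset_empty_iff.1 fun q hq =>
      (hgb hq).2 (hSc g ⟨hg, hgb.trans Set.sdiff_subset, hpg⟩ hq))
  exact ⟨f \ c, hθ.isAtomOf_of_forall_mem hF hb hne key, Set.sdiff_subset, key _ hb hne le_rfl⟩

theorem atomic (hθ : IsRep F θ) (hF : IsPFAlgebra F) (hJ : JoinComplete F θ) : Atomic F := by
  intro f hf hne
  obtain ⟨p, hp⟩ := Set.nonempty_iff_ne_empty.2 (hθ.map_ne_empty hF hf hne)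
  obtain ⟨b, hb, hbf, -⟩ := hθ.exists_isAtomOf_subset_mem hF hJ hf hp
  exact ⟨b, hb, hbf⟩

theorem compLeftDistribJoins (hθ : IsRep F θ) (hF : IsPFAlgebra F) (hJ : JoinComplete F θ) :
    CompLeftDistribJoins F := by
  intro a ha S hS m hm
  have ham := hF.comp_mem a ha m hm.1
  refine ⟨ham, ?_, fun c hc hub => ?_⟩
  · rintro _ ⟨s, hs, rfl⟩
    exact comp_mono_right a (hm.2.1 s hs)
  · rw [← hθ.map_subset_map_iff hF ham hc, hθ.comp_eq a ha m hm.1, hJ S hS m hm, comp_biUnion]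
    refine Set.iUnion₂_subset fun s hs => ?_
    rw [← hθ.comp_eq a ha s (hS hs), hθ.map_subset_map_iff hF (hF.comp_mem a ha s (hS hs)) hc]
    exact hub _ ⟨s, hs, rfl⟩

end IsRep

section AtomRep

variable {F : Set (Set (X × X))}

variable (F) in
abbrev Atom : Type _ := {b : Set (X × X) // IsAtomOf F b}

variable (F) in
/-- The representation over the atoms: `f` acts on an atom `a` by `a ↦ a ∘ f` where this is
nonempty, in which case it is again an atom. -/
def atomRep (f : Set (X × X)) : Set (Atom F × Atom F) :=
  {p | comp p.1.val f = p.2.val}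

theorem mem_atomRep_iff_subset (hF : IsPFAlgebra F) {f : Set (X × X)} (hf : f ∈ F)
    {a b : Atom F} : (a, b) ∈ atomRep F f ↔ b.val ⊆ comp a.val f := by
  refine ⟨fun h => h.ge, fun h => ?_⟩
  have hne : comp a.val f ≠ ∅ := fun h0 => b.2.2.1 (Set.subset_empty_iff.1 (h0 ▸ h))
  exact ((isAtomOf_comp hF a.2 hf hne).eq_of_subset b.2.1 b.2.2.1 h).symm

theorem atomRep_mono (hF : IsPFAlgebra F) {f g : Set (X × X)} (hg : g ∈ F) (hfg : f ⊆ g) :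
    atomRep F f ⊆ atomRep F g := fun ⟨_, _⟩ h =>
  (mem_atomRep_iff_subset hF hg).2 (h.ge.trans (comp_mono_right _ hfg))

theorem atomRep_subset_atomRep (hF : IsPFAlgebra F) (hAt : Atomic F) {f g : Set (X × X)}
    (hf : f ∈ F) (hg : g ∈ F) (h : atomRep F f ⊆ atomRep F g) : f ⊆ g := by
  by_contra hfg
  obtain ⟨⟨x, w⟩, hxw⟩ := Set.sdiff_nonempty.2 hfg
  obtain ⟨e, he, hed⟩ := hAt _ (hF.dom_mem (hF.diff_mem hf hg))
    (Set.nonempty_iff_ne_empty.1 ⟨(x, x), mem_dom.2 ⟨rfl, w, hxw⟩⟩)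
  obtain ⟨⟨x₀, x₁⟩, hx⟩ := Set.nonempty_iff_ne_empty.2 he.2.1
  obtain ⟨rfl, w₀, hw₀⟩ := mem_dom.1 (hed hx)
  have hne : comp e (f \ g) ≠ ∅ := Set.nonempty_iff_ne_empty.1 ⟨(x₀, w₀), x₀, hx, hw₀⟩
  let b : Atom F := ⟨_, isAtomOf_comp hF he (hF.diff_mem hf hg) hne⟩
  have hb : b.val ⊆ comp e f \ comp e g := ((hF.pf e he.1).comp_diff f g).subset
  have hbg : b.val ⊆ comp e g := (mem_atomRep_iff_subset hF hg (a := ⟨e, he⟩)).1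
    (h ((mem_atomRep_iff_subset hF hf).2 (hb.trans Set.sdiff_subset)))
  exact hne (Set.subset_empty_iff.1 fun q hq => (hb hq).2 (hbg hq))

theorem atomRep_comp (hF : IsPFAlgebra F) {f : Set (X × X)} (hf : f ∈ F) (g : Set (X × X)) :
    atomRep F (comp f g) = comp (atomRep F f) (atomRep F g) := by
  ext ⟨a, c⟩
  constructor
  · intro h
    have hne : comp a.val f ≠ ∅ := fun h0 => c.2.2.1 <| by
      rw [← h, ← comp_assoc, h0, empty_comp]
    exact ⟨⟨_, isAtomOf_comp hF a.2 hf hne⟩, rfl, (comp_assoc _ _ _).trans h⟩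
  · rintro ⟨b, hab, hbc⟩
    exact (comp_assoc _ _ _).symm.trans (congrArg (comp · g) hab |>.trans hbc)

theorem atomRep_inter (hF : IsPFAlgebra F) {f g : Set (X × X)} (hf : f ∈ F) (hg : g ∈ F) :
    atomRep F (f ∩ g) = atomRep F f ∩ atomRep F g := by
  ext ⟨a, b⟩
  rw [Set.mem_inter_iff, mem_atomRep_iff_subset hF (hF.inter_mem f hf g hg),
    mem_atomRep_iff_subset hF hf, mem_atomRep_iff_subset hF hg, (hF.pf _ a.2.1).comp_inter,
    Set.subset_inter_iff]

theorem atomRep_adom (hF : IsPFAlgebra F) {f : Set (X × X)} (hf : f ∈ F) :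
    atomRep F (adom f) = adom (atomRep F f) := by
  ext ⟨a, b⟩
  constructor
  · intro h
    obtain rfl : b = a :=
      Subtype.ext (a.2.eq_of_subset b.2.1 b.2.2.1 (h ▸ comp_adom_subset a.val f))
    have hf0 : comp b.val f = ∅ := (comp_adom_eq_self_iff _ f).1 h
    exact ⟨rfl, fun c hc => c.2.2.1 (hc.symm.trans hf0)⟩
  · rintro ⟨hab, h⟩
    obtain rfl : a = b := hab
    have hf0 : comp a.val f = ∅ := by
      by_contra hne
      exact h ⟨_, isAtomOf_comp hF a.2 hf hne⟩ rfl
    exact (comp_adom_eq_self_iff _ f).2 hf0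

theorem atomRep_isRep (hF : IsPFAlgebra F) (hAt : Atomic F) : IsRep F (atomRep F) where
  injOn _ hf _ hg h := (atomRep_subset_atomRep hF hAt hf hg h.le).antisymm
    (atomRep_subset_atomRep hF hAt hg hf h.ge)
  pf _ _ _ _ _ hy hz := Subtype.ext (hy.symm.trans hz)
  comp_eq _ hf g _ := atomRep_comp hF hf g
  inter_eq _ hf _ hg := atomRep_inter hF hf hg
  adom_eq _ hf := atomRep_adom hF hf

theorem atomRep_joinComplete (hF : IsPFAlgebra F) (hD : CompLeftDistribJoins F) :
    JoinComplete F (atomRep F) := by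
  intro S hS m hm
  refine Set.Subset.antisymm ?_ (Set.iUnion₂_subset fun s hs => atomRep_mono hF hm.1 (hm.2.1 s hs))
  rintro ⟨a, b⟩ h
  obtain ⟨s, hs, hne⟩ : ∃ s ∈ S, comp a.val s ≠ ∅ := by
    by_contra! h0
    refine b.2.2.1 (h ▸ (hD a.val a.2.1 S hS m hm).eq_empty hF ?_)
    rintro _ ⟨s, hs, rfl⟩
    exact h0 s hs
  exact Set.mem_iUnion₂.2 ⟨s, hs, b.2.eq_of_subset (hF.comp_mem _ a.2.1 s (hS hs)) hne
    (h ▸ comp_mono_right _ (hm.2.1 s hs))⟩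

theorem atomRep_meetComplete (hF : IsPFAlgebra F) (hD : CompLeftDistribJoins F) :
    MeetComplete F (atomRep F) := by
  rintro S hS ⟨s₀, hs₀⟩ m hm
  refine Set.Subset.antisymm
    (Set.subset_iInter₂ fun s hs => atomRep_mono hF (hS hs) (hm.2.1 s hs)) ?_
  rintro ⟨a, b⟩ h
  have has : ∀ s ∈ S, comp a.val s = b.val := fun s hs => Set.mem_iInter₂.1 h s hs
  have ha := hF.pf _ a.2.1
  -- `s₀ \ m` is the join of the `s₀ \ s`, each of which `a` sends to `b \ b = ∅`
  have hdiff : comp a.val (s₀ \ m) = ∅ := by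
    refine (hD a.val a.2.1 _ ?_ _ (hm.diff_isLUBIn hF hS hs₀)).eq_empty hF ?_
    · rintro _ ⟨s, hs, rfl⟩
      exact hF.diff_mem (hS hs₀) (hS hs)
    · rintro _ ⟨_, ⟨s, hs, rfl⟩, rfl⟩
      dsimp only
      rw [ha.comp_diff, has s hs, has s₀ hs₀, Set.sdiff_self]
  show comp a.val m = b.val
  rw [← Set.sdiff_sdiff_cancel_left (hm.2.1 s₀ hs₀), ha.comp_diff, hdiff, Set.sdiff_empty,
    has s₀ hs₀]

end AtomRep

end PFAlg

open PFAlg in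
/-- an algebra of partial functions admits a complete representation by
partial functions iff it is atomic and composition is completely left-distributive over
joins. -/
theorem stmt18 {X : Type u} (F : Set (Set (X × X))) (hF : IsPFAlgebra F) :
    (∃ (Y : Type u) (θ : Set (X × X) → Set (Y × Y)),
        IsRep F θ ∧ MeetComplete F θ ∧ JoinComplete F θ) ↔
      (Atomic F ∧ CompLeftDistribJoins F) := by
  constructor
  · rintro ⟨Y, θ, hθ, -, hJ⟩
    exact ⟨hθ.atomic hF hJ, hθ.compLeftDistribJoins hF hJ⟩
  · rintro ⟨hAt, hD⟩
    exact ⟨Atom F, atomRep F, atomRep_isRep hF hAt, atomRep_meetComplete hF hD,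
      atomRep_joinComplete hF hD⟩
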